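/- Let A = S + N be a real n×n matrix with S semi-simple, N nilpotent, and SN = NS. If exp(A) is semi-simple, then N = 0. -/

import Mathlib

/-!
Complexify. There `exp A = exp S * exp N`, where `exp S` and `exp A` are commuting diagonalizable
matrices and `exp A - exp S = exp S * (exp N - 1)` is nilpotent. A nilpotent difference of commuting
semisimple endomorphisms is semisimple, hence zero, so `exp N = 1`. For nilpotent `N` one has
`exp N = 1 + N * (1 + N * w)` with `N` and `w` commuting, and `1 + N * w` is a unit, so `N = 0`.
-/

open Matrix

/-- A real square matrix is semi-simple if it is diagonalizable over `ℂ`. -/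
def Matrix.IsSemisimpleR {n : ℕ} (A : Matrix (Fin n) (Fin n) ℝ) : Prop :=
  ∃ (P : Matrix (Fin n) (Fin n) ℂ) (d : Fin n → ℂ),
    IsUnit P.det ∧ A.map (fun x => (x : ℂ)) = P * Matrix.diagonal d * P⁻¹

open Polynomial Finset

namespace IsNilpotent

variable {A : Type*} [Ring A] [Module ℚ A] {a : A}

theorem exists_exp_eq_one_add_mul (ha : IsNilpotent a) :
    ∃ w, Commute a w ∧ exp a = 1 + a * (1 + a * w) := by
  obtain ⟨k, hk⟩ := ha
  refine ⟨∑ i ∈ range k, ((i + 2).factorial : ℚ)⁻¹ • a ^ i,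
    Commute.sum_right _ _ _ fun i _ ↦ ((Commute.refl a).pow_right i).smul_right _, ?_⟩
  rw [exp_eq_sum (k := k + 2) (pow_eq_zero_of_le (by omega) hk), sum_range_succ', sum_range_succ']
  simp [mul_add, mul_sum, pow_succ', mul_smul_comm, add_comm, add_left_comm]

theorem eq_zero_of_exp_eq_one (ha : IsNilpotent a) (h : exp a = 1) : a = 0 := by
  obtain ⟨w, hw, hexp⟩ := ha.exists_exp_eq_one_add_mul
  rw [hexp, add_eq_left] at h
  exact (hw.isNilpotent_mul_right ha).isUnit_one_add.mul_left_eq_zero.mp h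

end IsNilpotent

theorem NormedSpace.exp_eq_isNilpotent_exp {𝔸 : Type*} [Ring 𝔸] [Algebra ℚ 𝔸]
    [TopologicalSpace 𝔸] [IsTopologicalRing 𝔸] {a : 𝔸} (ha : IsNilpotent a) :
    exp a = IsNilpotent.exp a := by
  obtain ⟨k, hk⟩ := ha
  rw [exp_eq_tsum_rat, IsNilpotent.exp_eq_sum hk]
  exact tsum_eq_sum fun i hi ↦ by rw [pow_eq_zero_of_le (by simpa using hi) hk, smul_zero]

theorem Module.End.eq_of_isNilpotent_sub_of_isSemisimple {K V : Type*} [Field K] [PerfectField K]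
    [AddCommGroup V] [Module K V] [FiniteDimensional K V] {f g : Module.End K V}
    (hfg : Commute f g) (hf : f.IsSemisimple) (hg : g.IsSemisimple) (hn : IsNilpotent (f - g)) :
    f = g :=
  sub_eq_zero.mp (eq_zero_of_isNilpotent_isSemisimple hn (hf.sub_of_commute hfg hg))

namespace Matrix

variable {m : Type*} [Fintype m] [DecidableEq m]

theorem aeval_diagonal {R : Type*} [CommSemiring R] (d : m → R) (p : R[X]) :
    aeval (diagonal d) p = diagonal fun i ↦ aeval (d i) p := by
  rw [← diagonalAlgHom_apply (R := R), aeval_algHom_apply, aeval_pi_apply, diagonalAlgHom_apply]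

section Field

variable {K : Type*} [Field K]

theorem isSemisimple_toLin'_diagonal (d : m → K) :
    Module.End.IsSemisimple (toLin' (diagonal d)) := by
  classical
  let p : K[X] := ∏ c ∈ univ.image d, (X - C c)
  have hp : Squarefree p := (separable_prod_X_sub_C_iff'.mpr fun _ _ _ _ ↦ id).squarefree
  have hroot (i : m) : aeval (d i) p = 0 := by
    rw [map_prod]
    exact prod_eq_zero (mem_image_of_mem d (mem_univ i)) (by simp)
  refine Module.End.isSemisimple_of_squarefree_aeval_eq_zero hp ?_
  change aeval (toLinAlgEquiv' (diagonal d)) p = 0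
  rw [aeval_algEquiv, AlgHom.comp_apply, aeval_diagonal]
  simp [hroot]

theorem isSemisimple_toLin'_conj_iff {P : Matrix m m K} (hP : IsUnit P.det) (M : Matrix m m K) :
    Module.End.IsSemisimple (toLin' (P * M * P⁻¹)) ↔ Module.End.IsSemisimple (toLin' M) := by
  refine (LinearEquiv.isSemisimple_iff _ _ (toLinearEquiv' P (P.invertibleOfIsUnitDet hP)) ?_).symm
  change toLin' P ∘ₗ toLin' M = toLin' (P * M * P⁻¹) ∘ₗ toLin' P
  rw [← toLin'_mul, ← toLin'_mul, mul_assoc _ P⁻¹, nonsing_inv_mul P hP, mul_one]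

theorem eq_of_isNilpotent_sub_of_isSemisimple [PerfectField K] {X Y : Matrix m m K}
    (hXY : Commute X Y) (hX : Module.End.IsSemisimple (toLin' X))
    (hY : Module.End.IsSemisimple (toLin' Y)) (hn : IsNilpotent (X - Y)) : X = Y :=
  toLin'.injective <| Module.End.eq_of_isNilpotent_sub_of_isSemisimple (hXY.map toLinAlgEquiv')
    hX hY (by rw [← map_sub]; exact hn.map toLinAlgEquiv')

end Field

theorem exp_map_ofReal (M : Matrix m m ℝ) :
    (NormedSpace.exp M).map (↑) = NormedSpace.exp (M.map ((↑) : ℝ → ℂ)) := by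
  -- `NormedSpace.map_exp` is stated for Banach algebras; any algebra norm on matrices will do.
  let : NormedRing (Matrix m m ℝ) := Matrix.linftyOpNormedRing
  let : NormedAlgebra ℝ (Matrix m m ℝ) := Matrix.linftyOpNormedAlgebra
  let : NormedAlgebra ℚ (Matrix m m ℝ) := NormedAlgebra.restrictScalars ℚ ℝ _
  let : NormedRing (Matrix m m ℂ) := Matrix.linftyOpNormedRing
  let c := (Algebra.ofId ℝ ℂ).mapMatrix (m := m)
  exact NormedSpace.map_exp c c.toLinearMap.continuous_of_finiteDimensional M

namespace IsSemisimpleR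

variable {n : ℕ} {S : Matrix (Fin n) (Fin n) ℝ}

theorem isSemisimple_toLin'_map (hS : S.IsSemisimpleR) :
    Module.End.IsSemisimple (toLin' (S.map ((↑) : ℝ → ℂ))) := by
  obtain ⟨P, d, hP, hPd⟩ := hS
  rw [hPd, isSemisimple_toLin'_conj_iff hP]
  exact isSemisimple_toLin'_diagonal d

theorem exp (hS : S.IsSemisimpleR) : (NormedSpace.exp S).IsSemisimpleR := by
  obtain ⟨P, d, hP, hPd⟩ := hS
  refine ⟨P, NormedSpace.exp d, hP, ?_⟩
  rw [exp_map_ofReal, hPd, exp_conj _ _ ((isUnit_iff_isUnit_det P).mpr hP), exp_diagonal]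

end IsSemisimpleR

end Matrix

/-- If `A = S + N` with `S` semi-simple, `N` nilpotent, `SN = NS`, and `exp A` is
semi-simple, then `N = 0`. -/
theorem nilpotent_part_eq_zero_of_exp_isSemisimpleR {n : ℕ}
    (A S N : Matrix (Fin n) (Fin n) ℝ)
    (hA : A = S + N) (hS : S.IsSemisimpleR) (hN : IsNilpotent N)
    (hcomm : S * N = N * S)
    (hexp : (NormedSpace.exp A).IsSemisimpleR) :
    N = 0 := by
  have hN' : IsNilpotent (N.map ((↑) : ℝ → ℂ)) := hN.map Complex.ofRealHom.mapMatrix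
  have hcomm' : Commute (S.map ((↑) : ℝ → ℂ)) (N.map (↑)) :=
    (show Commute S N from hcomm).map Complex.ofRealHom.mapMatrix
  have hunip : IsNilpotent (NormedSpace.exp (N.map ((↑) : ℝ → ℂ)) - 1) :=
    NormedSpace.exp_eq_isNilpotent_exp hN' ▸ hN'.isNilpotent_exp_sub_one
  set E := NormedSpace.exp (S.map ((↑) : ℝ → ℂ))
  set U := NormedSpace.exp (N.map ((↑) : ℝ → ℂ))
  have hEU : Commute E U := hcomm'.exp
  have hsplit : (NormedSpace.exp A).map (↑) = E * U := by
    rw [exp_map_ofReal, hA, Matrix.map_add _ Complex.ofReal_add,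
      Matrix.exp_add_of_commute _ _ hcomm']
  have hE_semisimple : Module.End.IsSemisimple (toLin' E) := by
    simpa only [exp_map_ofReal] using hS.exp.isSemisimple_toLin'_map
  have hEU_semisimple : Module.End.IsSemisimple (toLin' (E * U)) :=
    hsplit ▸ hexp.isSemisimple_toLin'_map
  have hEU_sub_E : IsNilpotent (E * U - E) := by
    rw [← mul_sub_one]
    exact (hEU.sub_right (Commute.one_right E)).isNilpotent_mul_left hunip
  have hU : U = 1 := (Matrix.isUnit_exp _).mul_eq_left.mp <|
    eq_of_isNilpotent_sub_of_isSemisimple ((Commute.refl E).mul_left hEU.symm)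
      hEU_semisimple hE_semisimple hEU_sub_E
  have hN0 : N.map ((↑) : ℝ → ℂ) = 0 :=
    hN'.eq_zero_of_exp_eq_one (by rwa [← NormedSpace.exp_eq_isNilpotent_exp hN'])
  exact map_injective Complex.ofReal_injective (by simpa using hN0)
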